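/- Let M = (ρ, E) be a matroid with k = ρ(E) > 0 and n = |E|. Then d = min{|X| : ρ(E \ X) < k} satisfies d = n − k + 1 − max{η(Y) : Y a flat of M, Y ≠ E}, where η(Y) = |Y| − ρ(Y). -/
import Mathlib


open Finset

structure FinMatroid (α : Type*) [DecidableEq α] where
  E : Finset α
  rk : Finset α → ℕ
  rk_le_card : ∀ X, X ⊆ E → rk X ≤ X.card
  rk_mono : ∀ X Y, X ⊆ Y → Y ⊆ E → rk X ≤ rk Y
  rk_submod : ∀ X Y, X ⊆ E → Y ⊆ E → rk (X ∪ Y) + rk (X ∩ Y) ≤ rk X + rk Y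

namespace FinMatroid

variable {α : Type*} [DecidableEq α]

/-- Nullity: η(X) = |X| − ρ(X). -/
def eta (M : FinMatroid α) (X : Finset α) : ℕ := X.card - M.rk X

/-- A circuit is a minimal dependent set. -/
def Circuit (M : FinMatroid α) (C : Finset α) : Prop :=
  C ⊆ M.E ∧ M.rk C < C.card ∧ ∀ Y, Y ⊂ C → M.rk Y = Y.card

/-- A cyclic set is a (possibly empty) union of circuits. -/
def Cyclic (M : FinMatroid α) (X : Finset α) : Prop :=
  X ⊆ M.E ∧ ∀ x ∈ X, ∃ C, M.Circuit C ∧ C ⊆ X ∧ x ∈ C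

/-- Closure: cl(X) = {x ∈ E : ρ(X ∪ {x}) = ρ(X)}. -/
def cl (M : FinMatroid α) (X : Finset α) : Finset α :=
  M.E.filter (fun x => M.rk (insert x X) = M.rk X)

/-- A flat is a closure-closed subset of the ground set. -/
def Flat (M : FinMatroid α) (F : Finset α) : Prop :=
  F ⊆ M.E ∧ M.cl F = F

/-- A cyclic flat is a flat that is a union of circuits. -/
def CyclicFlat (M : FinMatroid α) (F : Finset α) : Prop :=
  M.Cyclic F ∧ M.Flat F

/-- Minimum distance d = min {|X| : ρ(E \ X) < ρ(E)}. -/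
noncomputable def dist (M : FinMatroid α) : ℕ :=
  sInf {m | ∃ X, X ⊆ M.E ∧ X.card = m ∧ M.rk (M.E \ X) < M.rk M.E}

/-- S is an (r,δ)-locality set: |S| ≤ r + δ − 1 and
    min {|X| : X ⊆ S, ρ(S \ X) < ρ(S)} ≥ δ. -/
def LocalitySet (M : FinMatroid α) (r δ : ℕ) (S : Finset α) : Prop :=
  S ⊆ M.E ∧ S.card ≤ r + δ - 1 ∧
    ∀ X, X ⊆ S → M.rk (S \ X) < M.rk S → δ ≤ X.card

/-- M has all-symbol (r,δ)-locality. -/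
def HasLocality (M : FinMatroid α) (r δ : ℕ) : Prop :=
  ∀ x ∈ M.E, ∃ S, x ∈ S ∧ M.LocalitySet r δ S

/-- Restriction of M to X ⊆ E. -/
def restrict (M : FinMatroid α) (X : Finset α) (hX : X ⊆ M.E) : FinMatroid α where
  E := X
  rk := M.rk
  rk_le_card := fun Y hY => M.rk_le_card Y (hY.trans hX)
  rk_mono := fun Y Z h hZ => M.rk_mono Y Z h (hZ.trans hX)
  rk_submod := fun Y Z hY hZ => M.rk_submod Y Z (hY.trans hX) (hZ.trans hX)

end FinMatroid

namespace FinMatroid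

variable {α : Type*} [DecidableEq α] (M : FinMatroid α)

lemma cl_subset_E (X : Finset α) : M.cl X ⊆ M.E := filter_subset _ _

lemma mem_cl {X : Finset α} {x : α} :
    x ∈ M.cl X ↔ x ∈ M.E ∧ M.rk (insert x X) = M.rk X := mem_filter

lemma subset_cl {X : Finset α} (hX : X ⊆ M.E) : X ⊆ M.cl X := by
  intro x hx
  rw [M.mem_cl]
  exact ⟨hX hx, by rw [insert_eq_self.2 hx]⟩

lemma rk_insert_eq_step {X Z : Finset α} {x : α}
    (hx : x ∈ M.E) (hZ : Z ⊆ M.E) (hXZ : X ⊆ Z)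
    (h : M.rk (insert x X) = M.rk X) : M.rk (insert x Z) = M.rk Z := by
  have hXE : X ⊆ M.E := hXZ.trans hZ
  have hsub := M.rk_submod (insert x X) Z (insert_subset hx hXE) hZ
  have hu : insert x X ∪ Z = insert x Z := by
    rw [insert_union, union_eq_right.2 hXZ]
  have hi : X ⊆ insert x X ∩ Z := subset_inter (subset_insert _ _) hXZ
  have hiE : insert x X ∩ Z ⊆ M.E := (inter_subset_right).trans hZ
  have h1 : M.rk X ≤ M.rk (insert x X ∩ Z) := M.rk_mono _ _ hi hiE
  have h2 : M.rk (insert x Z) ≤ M.rk Z := by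
    rw [hu, h] at hsub; omega
  have h3 : M.rk Z ≤ M.rk (insert x Z) :=
    M.rk_mono _ _ (subset_insert _ _) (insert_subset hx hZ)
  omega

lemma rk_union_of_subset_cl {X : Finset α} (hX : X ⊆ M.E) :
    ∀ W : Finset α, W ⊆ M.cl X → M.rk (X ∪ W) = M.rk X := by
  intro W
  induction W using Finset.induction_on with
  | empty => simp
  | @insert a W ha ih =>
    intro hW
    have haW : a ∈ M.cl X := hW (mem_insert_self a W)
    have hWc : W ⊆ M.cl X := (subset_insert a W).trans hW
    rw [M.mem_cl] at haW
    have hZE : X ∪ W ⊆ M.E := union_subset hX (hWc.trans (M.cl_subset_E X))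
    have := M.rk_insert_eq_step haW.1 hZE subset_union_left haW.2
    rw [union_insert, this, ih hWc]

lemma rk_cl {X : Finset α} (hX : X ⊆ M.E) : M.rk (M.cl X) = M.rk X := by
  have := M.rk_union_of_subset_cl hX (M.cl X) Subset.rfl
  rwa [union_eq_right.2 (M.subset_cl hX)] at this

lemma cl_flat {X : Finset α} (hX : X ⊆ M.E) : M.Flat (M.cl X) := by
  refine ⟨M.cl_subset_E X, ?_⟩
  apply Subset.antisymm
  · intro y hy
    rw [M.mem_cl] at hy ⊢
    refine ⟨hy.1, ?_⟩
    have h1 : M.rk (insert y X) ≤ M.rk (insert y (M.cl X)) :=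
      M.rk_mono _ _ (insert_subset_insert _ (M.subset_cl hX))
        (insert_subset hy.1 (M.cl_subset_E X))
    have h2 : M.rk X ≤ M.rk (insert y X) :=
      M.rk_mono _ _ (subset_insert _ _) (insert_subset hy.1 hX)
    rw [hy.2, M.rk_cl hX] at h1
    omega
  · exact M.subset_cl (M.cl_subset_E X)

lemma rk_insert_le {Y : Finset α} {x : α} (hx : x ∈ M.E) (hY : Y ⊆ M.E) :
    M.rk (insert x Y) ≤ M.rk Y + 1 := by
  have hsub := M.rk_submod {x} Y (singleton_subset_iff.2 hx) hY
  have hu : {x} ∪ Y = insert x Y := by ext y; simp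
  rw [hu] at hsub
  have h1 : M.rk {x} ≤ 1 := by
    simpa using M.rk_le_card {x} (singleton_subset_iff.2 hx)
  omega

lemma rk_insert_of_flat_notMem {Y : Finset α} {x : α} (hF : M.Flat Y)
    (hx : x ∈ M.E) (hxY : x ∉ Y) : M.rk (insert x Y) = M.rk Y + 1 := by
  have hne : M.rk (insert x Y) ≠ M.rk Y := by
    intro h
    apply hxY
    rw [← hF.2, M.mem_cl]
    exact ⟨hx, h⟩
  have h1 := M.rk_insert_le hx hF.1
  have h2 : M.rk Y ≤ M.rk (insert x Y) :=
    M.rk_mono _ _ (subset_insert _ _) (insert_subset hx hF.1)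
  omega

lemma rk_lt_of_proper_flat {Y : Finset α} (hF : M.Flat Y) (hne : Y ≠ M.E) :
    M.rk Y < M.rk M.E := by
  obtain ⟨x, hxE, hxY⟩ := exists_of_ssubset (hF.1.ssubset_of_ne hne)
  have h := M.rk_insert_of_flat_notMem hF hxE hxY
  have h2 : M.rk (insert x Y) ≤ M.rk M.E :=
    M.rk_mono _ _ (insert_subset hxE hF.1) Subset.rfl
  omega

lemma climb : ∀ (j : ℕ) (Y : Finset α), M.Flat Y → Y ≠ M.E →
    M.rk M.E - 1 - M.rk Y ≤ j →
    ∃ Z, M.Flat Z ∧ Z ⊆ M.E ∧ M.rk Z = M.rk M.E - 1 ∧ M.eta Y ≤ M.eta Z := by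
  intro j
  induction j with
  | zero =>
    intro Y hF hne hj
    have hlt := M.rk_lt_of_proper_flat hF hne
    exact ⟨Y, hF, hF.1, by omega, le_rfl⟩
  | succ j ih =>
    intro Y hF hne hj
    have hlt := M.rk_lt_of_proper_flat hF hne
    by_cases h : M.rk Y = M.rk M.E - 1
    · exact ⟨Y, hF, hF.1, h, le_rfl⟩
    · obtain ⟨x, hxE, hxY⟩ := exists_of_ssubset (hF.1.ssubset_of_ne hne)
      have hins : insert x Y ⊆ M.E := insert_subset hxE hF.1
      set Z := M.cl (insert x Y) with hZdef
      have hZF : M.Flat Z := M.cl_flat hins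
      have hrkZ : M.rk Z = M.rk Y + 1 := by
        rw [hZdef, M.rk_cl hins, M.rk_insert_of_flat_notMem hF hxE hxY]
      have hZne : Z ≠ M.E := by
        intro hEq
        rw [hEq] at hrkZ
        omega
      have hcard : Y.card + 1 ≤ Z.card := by
        have : insert x Y ⊆ Z := M.subset_cl hins
        have h1 := card_le_card this
        rw [card_insert_of_notMem hxY] at h1
        omega
      have hrkY : M.rk Y ≤ Y.card := M.rk_le_card Y hF.1
      have heta : M.eta Y ≤ M.eta Z := by
        unfold eta; omega
      obtain ⟨W, hWF, hWE, hWrk, hWeta⟩ := ih Z hZF hZne (by omega)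
      exact ⟨W, hWF, hWE, hWrk, heta.trans hWeta⟩

end FinMatroid

theorem dist_eq_via_proper_flats {α : Type*} [DecidableEq α] (M : FinMatroid α)
    (hk : 0 < M.rk M.E) :
    M.dist = M.E.card - M.rk M.E + 1 -
      sSup {m | ∃ Y, M.Flat Y ∧ Y ≠ M.E ∧ m = M.eta Y} := by
  classical
  set n := M.E.card with hn
  set k := M.rk M.E with hkdef
  set S : Set ℕ := {m | ∃ Y, M.Flat Y ∧ Y ≠ M.E ∧ m = M.eta Y} with hS
  set D : Set ℕ := {m | ∃ X, X ⊆ M.E ∧ X.card = m ∧ M.rk (M.E \ X) < M.rk M.E} with hD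
  have hkn : k ≤ n := M.rk_le_card M.E Subset.rfl
  have hSne : S.Nonempty := by
    refine ⟨M.eta (M.cl ∅), M.cl ∅, M.cl_flat (empty_subset _), ?_, rfl⟩
    intro h
    have h1 := M.rk_cl (empty_subset M.E)
    have h0 : M.rk ∅ = 0 := Nat.le_zero.1 (by simpa using M.rk_le_card ∅ (empty_subset _))
    rw [h] at h1
    omega
  have hSbdd : BddAbove S := by
    refine ⟨n, fun m hm => ?_⟩
    obtain ⟨Y, hYF, _, rfl⟩ := hm
    calc M.eta Y ≤ Y.card := Nat.sub_le _ _
    _ ≤ n := card_le_card hYF.1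
  set s := sSup S with hs
  have hsS : s ∈ S := Nat.sSup_mem hSne hSbdd
  obtain ⟨Y0, hY0F, hY0ne, hY0eta⟩ := hsS
  obtain ⟨Z, hZF, hZE, hZrk, hZeta⟩ := M.climb (k - 1) Y0 hY0F hY0ne (by omega)
  have hZne : Z ≠ M.E := by
    intro h
    rw [h] at hZrk
    omega
  have hZles : M.eta Z ≤ s := le_csSup hSbdd ⟨Z, hZF, hZne, rfl⟩
  have hZeta' : M.eta Z = s := le_antisymm hZles (hY0eta ▸ hZeta)
  have hrkZcard : M.rk Z ≤ Z.card := M.rk_le_card Z hZE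
  have hcardZ : Z.card = k - 1 + s := by
    unfold FinMatroid.eta at hZeta'
    omega
  have hZn : Z.card ≤ n := card_le_card hZE
  have hDmem : n - Z.card ∈ D := by
    refine ⟨M.E \ Z, sdiff_subset, by rw [card_sdiff_of_subset hZE], ?_⟩
    rw [sdiff_sdiff_right_self, inf_eq_inter, inter_eq_right.2 hZE, hZrk]
    omega
  have hlow : ∀ m ∈ D, n - k + 1 - s ≤ m := by
    rintro m ⟨X, hXE, rfl, hrk⟩
    set Y := M.cl (M.E \ X) with hY
    have hEX : M.E \ X ⊆ M.E := sdiff_subset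
    have hYF : M.Flat Y := M.cl_flat hEX
    have hrkY : M.rk Y = M.rk (M.E \ X) := M.rk_cl hEX
    have hYne : Y ≠ M.E := by
      intro h
      rw [h] at hrkY
      omega
    have hetaY : M.eta Y ≤ s := le_csSup hSbdd ⟨Y, hYF, hYne, rfl⟩
    have h1 : M.E \ X ⊆ Y := M.subset_cl hEX
    have h2 : (M.E \ X).card = n - X.card := card_sdiff_of_subset hXE
    have h3 : Y.card ≤ n := card_le_card hYF.1
    have h4 : (M.E \ X).card ≤ Y.card := card_le_card h1
    have h5 : M.rk Y ≤ Y.card := M.rk_le_card Y hYF.1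
    have h6 : X.card ≤ n := card_le_card hXE
    unfold FinMatroid.eta at hetaY
    have hrkE : M.rk (M.E \ X) ≤ Y.card := by omega
    have hrkYk : M.rk Y + 1 ≤ k := by omega
    have hYcard : Y.card ≤ M.rk Y + s := by omega
    have key : n ≤ X.card + Y.card := by omega
    clear_value n k s
    omega
  have hDne : D.Nonempty := ⟨_, hDmem⟩
  have h7 : M.dist ≤ n - Z.card := Nat.sInf_le hDmem
  have h8 : n - k + 1 - s ≤ M.dist := hlow _ (Nat.sInf_mem hDne)
  have h9 : M.dist = sInf D := rfl
  rw [h9] at h7 h8 ⊢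
  clear_value n k s
  omega
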